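/- Let (V,d,b) be an acyclic information network, run the Path-Effect process for T steps with transient initial set A ⊆ V\{d}. Then for every subset C ⊆ V, every non-void node v, and every 0 ≤ t ≤ T: Pr[{ω : P^t_v[0](ω) ∈ C}] = ∑_{u∈C} (b^t) v u, where b^t is the t-th matrix power of b. In particular this probability does not depend on the transient initial set A. -/

import Mathlib

open MeasureTheory

/-- An information network: a finite node set `V` with a distinguished void node `d`
and a row-stochastic weight matrix `b` with entries in `[0,1]` and `b d d = 1`. -/
structure InfoNetwork (V : Type*) [Fintype V] where
  d : V
  b : V → V → ℝ
  b_nonneg : ∀ v u, 0 ≤ b v u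
  b_le_one : ∀ v u, b v u ≤ 1
  row_sum : ∀ v, ∑ u, b v u = 1
  void_loop : b d d = 1

/-- The uniform probability measure on the interval `(0,1)`. -/
noncomputable def unifMeasure : Measure ℝ := volume.restrict (Set.Ioo (0:ℝ) 1)

/-- Product over `V` of uniform measures on `(0,1)`: the distribution of the thresholds. -/
noncomputable def thresholdMeasure (V : Type*) [Fintype V] : Measure (V → ℝ) :=
  Measure.pi fun _ : V => unifMeasure

namespace InfoNetwork

variable {V : Type*} [Fintype V]

/-- The set of active nodes at time `t` under the non-progressive linear threshold model,
with transient initial set `A`, permanent initial set `Ahat` and thresholds `θ`. -/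
noncomputable def activeSet (N : InfoNetwork V) (A Ahat : Set V) (θ : V → ℝ) : ℕ → Set V
  | 0 => A ∪ Ahat
  | t+1 => Ahat ∪
      {v | v ∉ Ahat ∧ θ v ≤ ∑ u, (N.activeSet A Ahat θ t).indicator (N.b v) u}

/-- `E[X^t_v(A,Ahat)]`: the probability (over the random thresholds) that `v` is active
at time `t`. -/
noncomputable def EX (N : InfoNetwork V) (A Ahat : Set V) (t : ℕ) (v : V) : ℝ :=
  (thresholdMeasure V {θ | v ∈ N.activeSet A Ahat θ t}).toReal

/-- The expected influence over the period `[1,T]`. -/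
noncomputable def sigmaBar (N : InfoNetwork V) (T : ℕ) (A Ahat : Set V) : ℝ :=
  (1 / (T : ℝ)) * ∑ t ∈ Finset.Icc 1 T, ∑ v, N.EX A Ahat t v

/-- The edge relation of the directed graph on `V \ {d}`. -/
def edgeRel (N : InfoNetwork V) (v u : V) : Prop :=
  v ≠ N.d ∧ u ≠ N.d ∧ 0 < N.b v u

/-- The network is acyclic if the directed graph on `V \ {d}` has no directed cycle. -/
def Acyclic (N : InfoNetwork V) : Prop :=
  ∀ v, ¬ Relation.TransGen N.edgeRel v v

end InfoNetwork

/-- A real-valued set function `f` is submodular on the ground set `S`. -/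
def SubmodularOn {V : Type*} (S : Set V) (f : Set V → ℝ) : Prop :=
  ∀ A B : Set V, A ⊆ B → B ⊆ S → ∀ w ∈ S, w ∉ B →
    f (insert w B) - f B ≤ f (insert w A) - f A

open scoped Classical in
/-- Inverse-CDF selection: the first element `u` of `s` (in the linear order) at which the
cumulative sum of the probabilities `p` reaches `x`; if there is none, a default value. -/
noncomputable def pick {V : Type*} [LinearOrder V] (s : Finset V) (p : V → ℝ) (x : ℝ)
    (dflt : V) : V :=
  if h : (s.filter fun u => x ≤ ∑ w ∈ s.filter (· ≤ u), p w).Nonempty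
  then (s.filter fun u => x ≤ ∑ w ∈ s.filter (· ≤ u), p w).min' h
  else dflt

open scoped Classical in
/-- The influence paths `P^t_v` of the Path-Effect process: `pePath N T A θ ξ t v j` is the
entry `P^t_v[j]` (entries with `j > t` are junk, set to the void node).  Here `θ` are the
thresholds and `ξ (v, i)` is the auxiliary selection variable of node `v` for time `i + 1`. -/
noncomputable def pePath {V : Type*} [Fintype V] [LinearOrder V] (N : InfoNetwork V)
    (T : ℕ) (A : Set V) (θ : V → ℝ) (ξ : V × Fin T → ℝ) : ℕ → V → ℕ → V
  | 0 => fun v j => if j = 0 then v else N.d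
  | t+1 => fun v j =>
      let prev := pePath N T A θ ξ t
      let At : Finset V := Finset.univ.filter fun u => prev u 0 ∈ A
      let f : ℝ := ∑ u ∈ At, N.b v u
      let x : ℝ := if h : t < T then ξ (v, ⟨t, h⟩) else 0
      let u : V :=
        if θ v ≤ f then
          pick (Finset.univ.filter fun u => 0 < N.b v u ∧ u ∈ At) (fun w => N.b v w / f) x N.d
        else
          pick (Finset.univ.filter fun u => 0 < N.b v u ∧ u ∉ At)
            (fun w => N.b v w / (1 - f)) x N.d
      if j = t + 1 then u else prev u j

/-- The probability measure of the Path-Effect process: product of uniform measures on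
`(0,1)` for the thresholds `θ ∈ (0,1)^V` and for the auxiliary selection variables
`ξ ∈ (0,1)^{V×{1,…,T}}`. -/
noncomputable def peMeasure (V : Type*) [Fintype V] (T : ℕ) :
    MeasureTheory.Measure ((V → ℝ) × (V × Fin T → ℝ)) :=
  (MeasureTheory.Measure.pi fun _ : V => unifMeasure).prod
    (MeasureTheory.Measure.pi fun _ : V × Fin T => unifMeasure)


/-!
Peel off the first step of the path: `P^{t+1}_v[0] = P^t_u[0]`, where `u = P^{t+1}_v[t+1]` is
the node chosen by `v` from its threshold `θ_v`, its selection variable `ξ_{v,t+1}` and the set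
of active nodes among its successors. By acyclicity no successor of `v` reaches `v`, so neither
that set nor `P^t_u[0]` depends on the coordinates of `v`. Resampling `θ_v` and `ξ_{v,t+1}`
alone, `v` then picks an active successor `u` with probability `f · (b v u / f)` and an inactive
one with probability `(1 - f) · (b v u / (1 - f))`, i.e. `u` with probability `b v u`,
independently of the event `P^t_u[0] ∈ C`. So `p_t(v) = Pr[P^t_v[0] ∈ C]` satisfies
`p_{t+1}(v) = ∑_u b v u · p_t(u)`, the recursion of the powers of `b`.
-/

open MeasureTheory Set Function

section Measurability

variable {Ω K : Type*} [MeasurableSpace Ω]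

theorem measurableSet_setOf_of_fibers [Countable K] {g : Ω → K}
    (hg : ∀ k, MeasurableSet {ω | g ω = k}) {P : K → Ω → Prop}
    (hP : ∀ k, MeasurableSet {ω | P k ω}) : MeasurableSet {ω | P (g ω) ω} := by
  have : {ω | P (g ω) ω} = ⋃ k, {ω | g ω = k} ∩ {ω | P k ω} := by ext; simp
  rw [this]
  exact .iUnion fun k => (hg k).inter (hP k)

theorem measurableSet_mem_of_fibers [Countable K] {g : Ω → K}
    (hg : ∀ k, MeasurableSet {ω | g ω = k}) (C : Set K) : MeasurableSet {ω | g ω ∈ C} :=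
  measurableSet_setOf_of_fibers hg (P := fun k _ => k ∈ C) fun _ => .const _

theorem measurableSet_filter_eq [Countable K] (s : Finset K) {q : Ω → K → Prop}
    [∀ ω, DecidablePred (q ω)] (hq : ∀ k, MeasurableSet {ω | q ω k}) (F : Finset K) :
    MeasurableSet {ω | s.filter (q ω) = F} := by
  have : {ω | s.filter (q ω) = F} = {ω | ∀ k, (k ∈ s ∧ q ω k) ↔ k ∈ F} := by
    ext; simp [Finset.ext_iff]
  rw [this, measurableSet_setOfPred]
  exact .forall fun k => (measurable_const.and (measurableSet_setOfPred.1 (hq k))).iff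
    measurable_const

end Measurability

section UpdateCoordinates

variable {ι κ α : Type*} [Fintype ι] [Fintype κ] [DecidableEq ι] [DecidableEq κ]
  [MeasurableSpace α]

theorem lintegral_lintegral_update {X : ι → Type*} [∀ i, MeasurableSpace (X i)]
    (μ : ∀ i, Measure (X i)) [∀ i, IsProbabilityMeasure (μ i)] {f : (∀ i, X i) → ENNReal}
    (hf : Measurable f) (i : ι) :
    ∫⁻ x, ∫⁻ a, f (update x i a) ∂μ i ∂Measure.pi μ = ∫⁻ x, f x ∂Measure.pi μ := by
  -- `μ i` is a probability measure, so integrating out coordinate `i` twice changes nothing.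
  rw [← lmarginal_singleton]
  refine lintegral_eq_of_lmarginal_eq {i} (hf.lmarginal μ) hf ?_
  rw [lmarginal_singleton]
  ext x
  simp_rw [lmarginal_update_of_mem μ (Finset.mem_singleton_self i), lintegral_const,
    measure_univ, mul_one]

theorem measure_prod_pi_eq_lintegral_update (μ : ι → Measure α) (ν : κ → Measure α)
    [∀ i, IsProbabilityMeasure (μ i)] [∀ k, IsProbabilityMeasure (ν k)]
    {B : Set ((ι → α) × (κ → α))} (hB : MeasurableSet B) (i : ι) (k : κ) :
    ((Measure.pi μ).prod (Measure.pi ν)) B =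
      ∫⁻ ω, ((μ i).prod (ν k)) {p | (update ω.1 i p.1, update ω.2 k p.2) ∈ B}
        ∂(Measure.pi μ).prod (Measure.pi ν) := by
  -- Regard the product of the two `pi` measures as a single `pi` measure over `ι ⊕ κ`.
  let e := MeasurableEquiv.sumPiEquivProdPi fun _ : ι ⊕ κ => α
  have : ∀ j, IsProbabilityMeasure (Sum.elim μ ν j) := by
    rintro (i | k) <;> dsimp only [Sum.elim_inl, Sum.elim_inr] <;> infer_instance
  have he : MeasurePreserving e (Measure.pi (Sum.elim μ ν))
      ((Measure.pi μ).prod (Measure.pi ν)) :=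
    measurePreserving_sumPiEquivProdPi (Sum.elim μ ν)
  have hupd : ∀ ω a x, e (update (update ω (.inr k) x) (.inl i) a) =
      (update (e ω).1 i a, update (e ω).2 k x) := by
    intro ω a x
    refine Prod.ext (funext fun j => ?_) (funext fun j => ?_) <;>
      simp [e, MeasurableEquiv.coe_sumPiEquivProdPi, Equiv.sumPiEquivProdPi, update_apply]
  have hmeas : ∀ ω : ι ⊕ κ → α, MeasurableSet
      {p : α × α | e (update (update ω (.inr k) p.2) (.inl i) p.1) ∈ B} := fun ω =>
    hB.preimage (e.measurable.comp (by fun_prop))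
  rw [← he.measure_preimage hB.nullMeasurableSet,
    ← he.lintegral_comp_emb e.measurableEmbedding]
  simp_rw [← hupd, ← lintegral_indicator_one (e.measurable hB)]
  have hf : Measurable ((e ⁻¹' B).indicator (1 : (ι ⊕ κ → α) → ENNReal)) :=
    measurable_one.indicator (e.measurable hB)
  rw [← lintegral_lintegral_update _ hf (.inl i),
    ← lintegral_lintegral_update _ (by fun_prop) (.inr k)]
  refine lintegral_congr fun ω => ?_
  rw [Measure.prod_apply_symm (hmeas ω)]
  refine lintegral_congr fun x => ?_
  rw [← lintegral_indicator_one (measurable_prodMk_right (hmeas ω))]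
  rfl

end UpdateCoordinates

section Uniform

instance : IsProbabilityMeasure unifMeasure :=
  ⟨by simp [unifMeasure]⟩

theorem unifMeasure_eq_restrict_Icc : unifMeasure = volume.restrict (Icc 0 1) :=
  Measure.restrict_congr_set Ioo_ae_eq_Icc

theorem unifMeasure_Ioc {a c : ℝ} (ha : 0 ≤ a) (hc : c ≤ 1) :
    unifMeasure (Ioc a c) = ENNReal.ofReal (c - a) := by
  rw [unifMeasure_eq_restrict_Icc, Measure.restrict_apply measurableSet_Ioc,
    inter_eq_left.2 (Ioc_subset_Icc_self.trans (Icc_subset_Icc ha hc)), Real.volume_Ioc]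

theorem unifMeasure_Iic {c : ℝ} (h1 : c ≤ 1) :
    unifMeasure (Iic c) = ENNReal.ofReal c := by
  have : Iic c ∩ Icc 0 1 = Icc 0 c := by
    ext
    simp only [mem_inter_iff, mem_Iic, mem_Icc]
    grind
  rw [unifMeasure_eq_restrict_Icc, Measure.restrict_apply measurableSet_Iic, this,
    Real.volume_Icc, sub_zero]

theorem unifMeasure_Ioi {c : ℝ} (h0 : 0 ≤ c) :
    unifMeasure (Ioi c) = ENNReal.ofReal (1 - c) := by
  have : Ioi c ∩ Icc 0 1 = Ioc c 1 := by
    ext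
    simp only [mem_inter_iff, mem_Ioi, mem_Icc, mem_Ioc]
    grind
  rw [unifMeasure_eq_restrict_Icc, Measure.restrict_apply measurableSet_Ioi, this,
    Real.volume_Ioc]

end Uniform

section Pick

variable {V : Type*} [LinearOrder V]

theorem pick_mem_or_eq (s : Finset V) (p : V → ℝ) (x : ℝ) (dflt : V) :
    pick s p x dflt ∈ s ∨ pick s p x dflt = dflt := by
  unfold pick
  split_ifs with h
  · exact .inl (Finset.mem_filter.1 (Finset.min'_mem _ h)).1
  · exact .inr rfl

theorem pick_eq_of_mem_Ioc {s : Finset V} {p : V → ℝ} (hp : ∀ w ∈ s, 0 ≤ p w) {u : V}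
    (hu : u ∈ s) {x : ℝ}
    (hx : x ∈ Ioc (∑ w ∈ s with w < u, p w) (∑ w ∈ s with w ≤ u, p w)) (dflt : V) :
    pick s p x dflt = u := by
  have huF : u ∈ s.filter fun w => x ≤ ∑ w' ∈ s with w' ≤ w, p w' :=
    Finset.mem_filter.2 ⟨hu, hx.2⟩
  rw [pick, dif_pos ⟨u, huF⟩]
  refine le_antisymm (Finset.min'_le _ _ huF) (Finset.le_min' _ _ _ fun w hw => ?_)
  obtain ⟨hws, hxw⟩ := Finset.mem_filter.1 hw
  by_contra! hwu
  have : ∑ w' ∈ s with w' ≤ w, p w' ≤ ∑ w' ∈ s with w' < u, p w' :=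
    Finset.sum_le_sum_of_subset_of_nonneg
      (fun w' hw' => by
        simp only [Finset.mem_filter] at hw' ⊢
        exact ⟨hw'.1, hw'.2.trans_lt hwu⟩)
      fun w' hw' _ => hp w' (Finset.mem_filter.1 hw').1
  exact absurd hx.1 (not_lt.2 (hxw.trans this))

theorem measurableSet_pick_eq [Countable V] (s : Finset V) (p : V → ℝ) (dflt u : V) :
    MeasurableSet {x : ℝ | pick s p x dflt = u} :=
  measurableSet_setOf_of_fibers
    (g := fun x : ℝ => s.filter fun w => x ≤ ∑ w' ∈ s with w' ≤ w, p w')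
    (measurableSet_filter_eq s fun _ => measurableSet_Iic)
    (P := fun F _ => (if h : F.Nonempty then F.min' h else dflt) = u) fun _ => .const _

theorem ofReal_le_unifMeasure_pick_eq {s : Finset V} {p : V → ℝ} (hp : ∀ w ∈ s, 0 ≤ p w)
    (hs : ∑ w ∈ s, p w = 1) {u : V} (hu : u ∈ s) (dflt : V) :
    ENNReal.ofReal (p u) ≤ unifMeasure {x | pick s p x dflt = u} := by
  have hcdf : ∑ w ∈ s with w ≤ u, p w = p u + ∑ w ∈ s with w < u, p w := by
    rw [← Finset.sum_insert (by simp)]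
    congr 1
    ext w
    simp only [Finset.mem_filter, Finset.mem_insert, le_iff_lt_or_eq]
    grind
  have hcdf_le : ∑ w ∈ s with w ≤ u, p w ≤ 1 :=
    (Finset.sum_le_sum_of_subset_of_nonneg (Finset.filter_subset (· ≤ u) s)
      fun w hw _ => hp w hw).trans hs.le
  have hlow : 0 ≤ ∑ w ∈ s with w < u, p w :=
    Finset.sum_nonneg fun w hw => hp w (Finset.mem_filter.1 hw).1
  rw [← add_sub_cancel_right (p u) (∑ w ∈ s with w < u, p w), ← hcdf,
    ← unifMeasure_Ioc hlow hcdf_le]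
  exact measure_mono fun x hx => pick_eq_of_mem_Ioc hp hu hx dflt

theorem unifMeasure_pick_eq [Fintype V] {s : Finset V} {p : V → ℝ} (hp : ∀ w ∈ s, 0 ≤ p w)
    (hs : ∑ w ∈ s, p w = 1) (dflt u : V) :
    unifMeasure {x | pick s p x dflt = u} = ENNReal.ofReal (if u ∈ s then p u else 0) := by
  -- The fibers partition `ℝ` and the `p u` sum to `1`, so none of the lower bounds is strict.
  let fiber u := (fun x => pick s p x dflt) ⁻¹' {u}
  have hle : ∀ u, (if u ∈ s then p u else 0) ≤ unifMeasure.real (fiber u) := by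
    intro u
    split_ifs with hu
    · exact (ENNReal.ofReal_le_iff_le_toReal (measure_ne_top _ _)).1
        (ofReal_le_unifMeasure_pick_eq hp hs hu dflt)
    · exact measureReal_nonneg
  have hsum : ∑ u, (if u ∈ s then p u else 0) = ∑ u, unifMeasure.real (fiber u) := by
    rw [Finset.sum_ite_mem, Finset.univ_inter, hs,
      sum_measureReal_preimage_singleton _ (fun u _ => measurableSet_pick_eq s p dflt u)
        fun _ _ => measure_ne_top _ _]
    simp
  rw [← ofReal_measureReal (measure_ne_top _ _)]
  exact congrArg ENNReal.ofReal
    ((Finset.sum_eq_sum_iff_of_le fun u _ => hle u).1 hsum u (Finset.mem_univ u)).symm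

theorem ofReal_sum_mul_unifMeasure_pick_eq [Fintype V] {s : Finset V} {q : V → ℝ}
    (hq : ∀ w ∈ s, 0 < q w) (dflt u : V) :
    ENNReal.ofReal (∑ w ∈ s, q w) *
        unifMeasure {x | pick s (fun w => q w / ∑ w' ∈ s, q w') x dflt = u} =
      ENNReal.ofReal (if u ∈ s then q u else 0) := by
  rcases s.eq_empty_or_nonempty with rfl | hne
  · simp
  have hpos : 0 < ∑ w ∈ s, q w := Finset.sum_pos hq hne
  rw [unifMeasure_pick_eq (fun w hw => div_nonneg (hq w hw).le hpos.le)
    (by rw [← Finset.sum_div, div_self hpos.ne']), ← ENNReal.ofReal_mul hpos.le]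
  congr 1
  split_ifs
  · field_simp
  · exact mul_zero _

end Pick

namespace InfoNetwork

section Graph

variable {V : Type*} [Fintype V] (N : InfoNetwork V)

theorem b_void_eq_zero {w : V} (hw : w ≠ N.d) : N.b N.d w = 0 := by
  classical
  have hrow := N.row_sum N.d
  rw [← Finset.add_sum_erase _ _ (Finset.mem_univ N.d), N.void_loop, add_eq_left] at hrow
  exact (Finset.sum_eq_zero_iff_of_nonneg fun u _ => N.b_nonneg _ u).1 hrow w (by simp [hw])

theorem of_b_mem_rowStochastic [DecidableEq V] : Matrix.of N.b ∈ Matrix.rowStochastic ℝ V :=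
  Matrix.mem_rowStochastic_iff_sum.2 ⟨N.b_nonneg, N.row_sum⟩

theorem pow_apply_void [DecidableEq V] (t : ℕ) :
    (Matrix.of N.b ^ t) N.d = (1 : Matrix V V ℝ) N.d := by
  induction t with
  | zero => rw [pow_zero]
  | succ t ih =>
    ext w
    rw [pow_succ', Matrix.mul_apply, Finset.sum_eq_single N.d
      (fun u _ hu => by simp [N.b_void_eq_zero hu]) (by simp), ih]
    simp [N.void_loop]

def Reaches (u w : V) : Prop := Relation.ReflTransGen (fun a b => 0 < N.b a b) u w

theorem eq_void_of_reaches_void {w : V} (h : N.Reaches N.d w) : w = N.d := by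
  induction h with
  | refl => rfl
  | tail _ hbc ih =>
    subst ih
    by_contra hc
    exact hbc.ne' (N.b_void_eq_zero hc)

theorem transGen_edgeRel_of_reaches {v u w : V} (hv : v ≠ N.d) (hvu : 0 < N.b v u)
    (h : N.Reaches u w) (hw : w ≠ N.d) : Relation.TransGen N.edgeRel v w := by
  induction h with
  | refl => exact .single ⟨hv, hw, hvu⟩
  | @tail b c _ hbc ih =>
    have hb : b ≠ N.d := by
      rintro rfl
      exact hbc.ne' (N.b_void_eq_zero hw)
    exact (ih hb).tail ⟨hb, hw, hbc⟩

theorem not_reaches_of_pos (hacyc : N.Acyclic) {v u : V} (hv : v ≠ N.d) (hvu : 0 < N.b v u) :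
    ¬ N.Reaches u v :=
  fun h => hacyc v (N.transGen_edgeRel_of_reaches hv hvu h hv)

end Graph

section Selection

variable {V : Type*} [Fintype V] [LinearOrder V] (N : InfoNetwork V)

open scoped Classical in
/-- The node chosen by `v` in one step of `pePath` when `S` is the active set, `a` the threshold
and `x` the selection variable. -/
noncomputable def select (v : V) (S : Finset V) (a x : ℝ) : V :=
  if a ≤ ∑ u ∈ S, N.b v u then
    pick (Finset.univ.filter fun u => 0 < N.b v u ∧ u ∈ S) (fun w => N.b v w / ∑ u ∈ S, N.b v u)
      x N.d
  else
    pick (Finset.univ.filter fun u => 0 < N.b v u ∧ u ∉ S)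
      (fun w => N.b v w / (1 - ∑ u ∈ S, N.b v u)) x N.d

theorem sum_b_filter_pos (v : V) (S : Finset V) :
    ∑ u ∈ Finset.univ.filter (fun u => 0 < N.b v u ∧ u ∈ S), N.b v u = ∑ u ∈ S, N.b v u := by
  rw [← Finset.sum_filter_of_ne (s := S) (p := fun u => 0 < N.b v u)
    fun u _ hu => (N.b_nonneg v u).lt_of_ne' hu]
  congr 1
  ext u
  simp [and_comm]

theorem sum_b_filter_pos_not_mem (v : V) (S : Finset V) :
    ∑ u ∈ Finset.univ.filter (fun u => 0 < N.b v u ∧ u ∉ S), N.b v u =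
      1 - ∑ u ∈ S, N.b v u := by
  have hsplit := Finset.sum_filter_add_sum_filter_not
    (Finset.univ.filter fun u => 0 < N.b v u) (· ∈ S) (N.b v)
  rw [Finset.filter_filter, Finset.filter_filter, Finset.sum_filter_of_ne
    fun u _ hu => (N.b_nonneg v u).lt_of_ne' hu, N.row_sum, N.sum_b_filter_pos] at hsplit
  linarith

theorem select_congr {v : V} {S S' : Finset V} (h : ∀ w, 0 < N.b v w → (w ∈ S ↔ w ∈ S'))
    (a x : ℝ) : N.select v S a x = N.select v S' a x := by
  have hpos : Finset.univ.filter (fun u => 0 < N.b v u ∧ u ∈ S) =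
      Finset.univ.filter (fun u => 0 < N.b v u ∧ u ∈ S') := by
    ext w
    simp only [Finset.mem_filter, Finset.mem_univ, true_and]
    exact and_congr_right (h w)
  have hneg : Finset.univ.filter (fun u => 0 < N.b v u ∧ u ∉ S) =
      Finset.univ.filter (fun u => 0 < N.b v u ∧ u ∉ S') := by
    ext w
    simp only [Finset.mem_filter, Finset.mem_univ, true_and]
    exact and_congr_right fun hw => not_congr (h w hw)
  have hsum : ∑ u ∈ S, N.b v u = ∑ u ∈ S', N.b v u := by
    rw [← N.sum_b_filter_pos, hpos, N.sum_b_filter_pos]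
  unfold select
  rw [hsum, hpos, hneg]

theorem select_pos_or_eq_void (v : V) (S : Finset V) (a x : ℝ) :
    0 < N.b v (N.select v S a x) ∨ N.select v S a x = N.d := by
  unfold select
  split_ifs
  all_goals
    refine (pick_mem_or_eq _ _ x N.d).imp (fun h => ?_) id
    exact (Finset.mem_filter.1 h).2.1

theorem select_slice (v : V) (S : Finset V) (u : V) :
    (unifMeasure.prod unifMeasure) {p : ℝ × ℝ | N.select v S p.1 p.2 = u} =
      ENNReal.ofReal (N.b v u) := by
  set f := ∑ u ∈ S, N.b v u
  set Γin := Finset.univ.filter fun u => 0 < N.b v u ∧ u ∈ S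
  set Γout := Finset.univ.filter fun u => 0 < N.b v u ∧ u ∉ S
  have hin : ∑ w ∈ Γin, N.b v w = f := N.sum_b_filter_pos v S
  have hout : ∑ w ∈ Γout, N.b v w = 1 - f := N.sum_b_filter_pos_not_mem v S
  have hf0 : 0 ≤ f := Finset.sum_nonneg fun w _ => N.b_nonneg v w
  have hf1 : f ≤ 1 := by linarith [Finset.sum_nonneg fun w (_ : w ∈ Γout) => N.b_nonneg v w]
  have hset : {p : ℝ × ℝ | N.select v S p.1 p.2 = u} =
      Iic f ×ˢ {x | pick Γin (fun w => N.b v w / f) x N.d = u} ∪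
        Ioi f ×ˢ {x | pick Γout (fun w => N.b v w / (1 - f)) x N.d = u} := by
    ext ⟨a, x⟩
    by_cases h : a ≤ f <;> simp [select, h, f, Γin, Γout, not_le.1]
  have hin' := ofReal_sum_mul_unifMeasure_pick_eq (s := Γin) (q := N.b v)
    (fun w hw => (Finset.mem_filter.1 hw).2.1) N.d u
  have hout' := ofReal_sum_mul_unifMeasure_pick_eq (s := Γout) (q := N.b v)
    (fun w hw => (Finset.mem_filter.1 hw).2.1) N.d u
  rw [hin] at hin'
  rw [hout] at hout'
  rw [hset, measure_union (disjoint_prod.2 (.inl (Iic_disjoint_Ioi le_rfl)))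
      (measurableSet_Ioi.prod (measurableSet_pick_eq _ _ _ _)),
    Measure.prod_prod, Measure.prod_prod, unifMeasure_Iic hf1, unifMeasure_Ioi hf0, hin', hout',
    ← ENNReal.ofReal_add (by split_ifs <;> simp [N.b_nonneg]) (by split_ifs <;> simp [N.b_nonneg])]
  congr 1
  rcases (N.b_nonneg v u).lt_or_eq with hpos | hzero
  · by_cases hS : u ∈ S <;> simp [Γin, Γout, hpos, hS]
  · simp [← hzero]

theorem measurableSet_select_eq {Ω : Type*} [MeasurableSpace Ω] {a x : Ω → ℝ}
    (ha : Measurable a) (hx : Measurable x) (v : V) (S : Finset V) (u : V) :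
    MeasurableSet {ω | N.select v S (a ω) (x ω) = u} := by
  have hle : MeasurableSet {ω | a ω ≤ ∑ w ∈ S, N.b v w} := measurableSet_le ha measurable_const
  rw [measurableSet_setOfPred]
  unfold select
  simp only [apply_ite (· = u)]
  exact Measurable.ite hle ((measurableSet_pick_eq _ _ _ _).mem.comp hx)
    ((measurableSet_pick_eq _ _ _ _).mem.comp hx)

end Selection

end InfoNetwork

section PathEffect

variable {V : Type*} [Fintype V] [LinearOrder V] (N : InfoNetwork V) (T : ℕ) (A : Set V)

open scoped Classical in
noncomputable def peSelected (θ : V → ℝ) (ξ : V × Fin T → ℝ) (t : ℕ) (v : V) : V :=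
  N.select v (Finset.univ.filter fun u => pePath N T A θ ξ t u 0 ∈ A) (θ v)
    (if h : t < T then ξ (v, ⟨t, h⟩) else 0)

theorem pePath_succ (θ : V → ℝ) (ξ : V × Fin T → ℝ) (t : ℕ) (v : V) (j : ℕ) :
    pePath N T A θ ξ (t + 1) v j =
      if j = t + 1 then peSelected N T A θ ξ t v
      else pePath N T A θ ξ t (peSelected N T A θ ξ t v) j :=
  rfl

theorem peSelected_pos_or_eq_void (θ : V → ℝ) (ξ : V × Fin T → ℝ) (t : ℕ) (v : V) :
    0 < N.b v (peSelected N T A θ ξ t v) ∨ peSelected N T A θ ξ t v = N.d :=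
  N.select_pos_or_eq_void ..

theorem pePath_void (θ : V → ℝ) (ξ : V × Fin T → ℝ) (t : ℕ) (j : ℕ) :
    pePath N T A θ ξ t N.d j = N.d := by
  induction t generalizing j with
  | zero => simp [pePath]
  | succ t ih =>
    have hsel : peSelected N T A θ ξ t N.d = N.d := by
      by_contra hsel
      exact ((peSelected_pos_or_eq_void ..).resolve_right hsel).ne' (N.b_void_eq_zero hsel)
    rw [pePath_succ, hsel]
    split_ifs
    exacts [rfl, ih j]

theorem pePath_congr {θ θ' : V → ℝ} {ξ ξ' : V × Fin T → ℝ} (t : ℕ) {u : V}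
    (hθ : ∀ w, N.Reaches u w → θ w = θ' w)
    (hξ : ∀ w i, N.Reaches u w → ξ (w, i) = ξ' (w, i)) (j : ℕ) :
    pePath N T A θ ξ t u j = pePath N T A θ' ξ' t u j := by
  induction t generalizing u j with
  | zero => rfl
  | succ t ih =>
    have hstep : ∀ {w}, 0 < N.b u w → ∀ j, pePath N T A θ ξ t w j = pePath N T A θ' ξ' t w j :=
      fun hw => ih (fun w' h => hθ w' (.head hw h)) (fun w' i h => hξ w' i (.head hw h))
    have hsel : peSelected N T A θ ξ t u = peSelected N T A θ' ξ' t u := by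
      have hx : (if h : t < T then ξ (u, ⟨t, h⟩) else 0) =
          (if h : t < T then ξ' (u, ⟨t, h⟩) else 0) := by
        split_ifs <;> simp [hξ u _ .refl]
      unfold peSelected
      rw [hθ u .refl, hx]
      exact N.select_congr (fun w hw => by simp [hstep hw 0]) _ _
    rw [pePath_succ, pePath_succ, hsel]
    split_ifs
    · rfl
    rcases peSelected_pos_or_eq_void N T A θ' ξ' t u with hpos | hvoid
    · exact hstep hpos j
    · rw [hvoid, pePath_void, pePath_void]

theorem pePath_update_of_not_reaches {v w : V} (hw : ¬ N.Reaches w v) (θ : V → ℝ)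
    (ξ : V × Fin T → ℝ) (a x : ℝ) (i : Fin T) (t j : ℕ) :
    pePath N T A (update θ v a) (update ξ (v, i) x) t w j = pePath N T A θ ξ t w j :=
  pePath_congr N T A t
    (fun _ h => update_of_ne (by rintro rfl; exact hw h) _ _)
    (fun _ _ h => update_of_ne (by rintro ⟨⟩; exact hw h) _ _) j

open scoped Classical in
theorem measurableSet_pePath_eq (t : ℕ) (v : V) (j : ℕ) (u : V) :
    MeasurableSet {ω : (V → ℝ) × (V × Fin T → ℝ) | pePath N T A ω.1 ω.2 t v j = u} := by
  induction t generalizing v j u with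
  | zero => exact .const ((if j = 0 then v else N.d) = u)
  | succ t ih =>
    have hx : Measurable fun ω : (V → ℝ) × (V × Fin T → ℝ) =>
        if h : t < T then ω.2 (v, ⟨t, h⟩) else 0 := by
      split_ifs <;> fun_prop
    have hact : ∀ S : Finset V, MeasurableSet {ω : (V → ℝ) × (V × Fin T → ℝ) |
        (Finset.univ.filter fun w => pePath N T A ω.1 ω.2 t w 0 ∈ A) = S} :=
      measurableSet_filter_eq _ fun w => measurableSet_mem_of_fibers (ih w 0) A
    have hsel : ∀ u, MeasurableSet {ω : (V → ℝ) × (V × Fin T → ℝ) |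
        peSelected N T A ω.1 ω.2 t v = u} := fun u =>
      measurableSet_setOf_of_fibers hact
        (P := fun S ω => N.select v S (ω.1 v) (if h : t < T then ω.2 (v, ⟨t, h⟩) else 0) = u)
        fun S => N.measurableSet_select_eq (by fun_prop) hx v S u
    simp only [pePath_succ]
    split_ifs
    · exact hsel u
    · exact measurableSet_setOf_of_fibers hsel fun w => ih w j u

end PathEffect

theorem Matrix.sum_indicator_pow_succ_apply {V : Type*} [Fintype V] [DecidableEq V]
    (M : Matrix V V ℝ) (C : Set V) (t : ℕ) (v : V) :
    ∑ w, C.indicator ((M ^ (t + 1)) v) w = ∑ u, M v u * ∑ w, C.indicator ((M ^ t) u) w := by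
  simp_rw [Finset.mul_sum]
  rw [Finset.sum_comm]
  refine Finset.sum_congr rfl fun w _ => ?_
  by_cases hw : w ∈ C <;> simp [hw, pow_succ', Matrix.mul_apply]

section PathEffectMeasure

variable {V : Type*} [Fintype V] [LinearOrder V] (N : InfoNetwork V) (T : ℕ) (A : Set V)

instance : IsProbabilityMeasure (peMeasure V T) := by
  unfold peMeasure
  infer_instance

theorem peMeasure_const_mem (c : V) (C : Set V) :
    peMeasure V T {_ω | c ∈ C} = ENNReal.ofReal (∑ u, C.indicator ((1 : Matrix V V ℝ) c) u) := by
  rw [Finset.sum_eq_single c (fun u _ hu => by simp [Matrix.one_apply_ne' hu]) (by simp)]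
  by_cases hc : c ∈ C <;> simp [hc]

theorem measurableSet_pePath_mem (t : ℕ) (v : V) (j : ℕ) (C : Set V) :
    MeasurableSet {ω : (V → ℝ) × (V × Fin T → ℝ) | pePath N T A ω.1 ω.2 t v j ∈ C} :=
  measurableSet_mem_of_fibers (measurableSet_pePath_eq N T A t v j) C

theorem measurableSet_peSelected_eq (t : ℕ) (v u : V) :
    MeasurableSet {ω : (V → ℝ) × (V × Fin T → ℝ) | peSelected N T A ω.1 ω.2 t v = u} := by
  simpa [pePath_succ] using measurableSet_pePath_eq N T A (t + 1) v (t + 1) u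

open scoped Classical in
theorem peMeasure_peSelected_eq_inter {t : ℕ} (ht : t < T) {v u : V}
    (hΓ : ∀ w, 0 < N.b v w → ¬ N.Reaches w v) (hu : ¬ N.Reaches u v) (C : Set V) :
    peMeasure V T {ω | peSelected N T A ω.1 ω.2 t v = u ∧ pePath N T A ω.1 ω.2 t u 0 ∈ C} =
      ENNReal.ofReal (N.b v u) * peMeasure V T {ω | pePath N T A ω.1 ω.2 t u 0 ∈ C} := by
  set E := {ω : (V → ℝ) × (V × Fin T → ℝ) | pePath N T A ω.1 ω.2 t u 0 ∈ C}
  have hE : MeasurableSet E := measurableSet_pePath_mem N T A t u 0 C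
  have hslice : ∀ ω : (V → ℝ) × (V × Fin T → ℝ),
      (unifMeasure.prod unifMeasure) {p : ℝ × ℝ |
        (update ω.1 v p.1, update ω.2 (v, ⟨t, ht⟩) p.2) ∈
          {ω | peSelected N T A ω.1 ω.2 t v = u ∧ pePath N T A ω.1 ω.2 t u 0 ∈ C}} =
        E.indicator (fun _ => ENNReal.ofReal (N.b v u)) ω := by
    intro ω
    have hsel : ∀ a x, peSelected N T A (update ω.1 v a) (update ω.2 (v, ⟨t, ht⟩) x) t v =
        N.select v (Finset.univ.filter fun w => pePath N T A ω.1 ω.2 t w 0 ∈ A) a x := by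
      intro a x
      unfold peSelected
      rw [dif_pos ht, update_self, update_self]
      exact N.select_congr
        (fun w hw => by simp [pePath_update_of_not_reaches N T A (hΓ w hw)]) _ _
    by_cases hω : ω ∈ E
    · simpa [hsel, pePath_update_of_not_reaches N T A hu, indicator_of_mem hω,
        show pePath N T A ω.1 ω.2 t u 0 ∈ C from hω] using N.select_slice v _ u
    · simp [hsel, pePath_update_of_not_reaches N T A hu, indicator_of_notMem hω,
        show pePath N T A ω.1 ω.2 t u 0 ∉ C from hω]
  have hB : MeasurableSet
      {ω : (V → ℝ) × (V × Fin T → ℝ) |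
        peSelected N T A ω.1 ω.2 t v = u ∧ pePath N T A ω.1 ω.2 t u 0 ∈ C} :=
    (measurableSet_peSelected_eq N T A t v u).inter hE
  rw [peMeasure, measure_prod_pi_eq_lintegral_update _ _ hB v (v, ⟨t, ht⟩),
    lintegral_congr hslice, lintegral_indicator_const hE]

theorem peMeasure_pePath_succ_mem (hacyc : N.Acyclic) {v : V} (hv : v ≠ N.d) {t : ℕ}
    (ht : t < T) (C : Set V) :
    peMeasure V T {ω | pePath N T A ω.1 ω.2 (t + 1) v 0 ∈ C} =
      ∑ u, ENNReal.ofReal (N.b v u) * peMeasure V T {ω | pePath N T A ω.1 ω.2 t u 0 ∈ C} := by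
  have hunion : {ω : (V → ℝ) × (V × Fin T → ℝ) | pePath N T A ω.1 ω.2 (t + 1) v 0 ∈ C} =
      ⋃ u, {ω | peSelected N T A ω.1 ω.2 t v = u ∧ pePath N T A ω.1 ω.2 t u 0 ∈ C} := by
    ext ω
    simp [pePath_succ]
  have hmeas : ∀ u, MeasurableSet {ω : (V → ℝ) × (V × Fin T → ℝ) |
      peSelected N T A ω.1 ω.2 t v = u ∧ pePath N T A ω.1 ω.2 t u 0 ∈ C} := fun u =>
    (measurableSet_peSelected_eq N T A t v u).inter (measurableSet_pePath_mem N T A t u 0 C)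
  rw [hunion, measure_iUnion
    (fun u u' huu' => disjoint_left.2 fun ω h h' => huu' (h.1.symm.trans h'.1)) hmeas,
    tsum_fintype]
  refine Finset.sum_congr rfl fun u _ => ?_
  by_cases hu : N.Reaches u v
  · have hbu : N.b v u = 0 :=
      le_antisymm (not_lt.1 fun h => N.not_reaches_of_pos hacyc hv h hu) (N.b_nonneg v u)
    have hud : u ≠ N.d := by
      rintro rfl
      exact hv (N.eq_void_of_reaches_void hu)
    have hempty : {ω : (V → ℝ) × (V × Fin T → ℝ) |
        peSelected N T A ω.1 ω.2 t v = u ∧ pePath N T A ω.1 ω.2 t u 0 ∈ C} = ∅ := by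
      refine eq_empty_of_forall_notMem fun ω ⟨hsel, _⟩ => ?_
      rcases peSelected_pos_or_eq_void N T A ω.1 ω.2 t v with h | h <;> rw [hsel] at h
      exacts [h.ne' hbu, hud h]
    rw [hempty, measure_empty, hbu, ENNReal.ofReal_zero, zero_mul]
  · exact peMeasure_peSelected_eq_inter N T A ht (fun w hw => N.not_reaches_of_pos hacyc hv hw) hu C

end PathEffectMeasure

theorem pePath_source_prob_general {V : Type*} [Fintype V] [LinearOrder V] (N : InfoNetwork V)
    (hacyc : N.Acyclic) (T : ℕ) (A : Set V)
    (C : Set V) (v : V) (t : ℕ) (htT : t ≤ T) :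
    peMeasure V T {ω | pePath N T A ω.1 ω.2 t v 0 ∈ C} =
      ENNReal.ofReal (∑ u, C.indicator ((Matrix.of N.b ^ t) v) u) := by
  induction t generalizing v with
  | zero => exact peMeasure_const_mem T v C
  | succ t ih =>
    by_cases hv : v = N.d
    · subst hv
      simp only [pePath_void, N.pow_apply_void]
      exact peMeasure_const_mem T N.d C
    have hnonneg : ∀ u, 0 ≤ ∑ w, C.indicator ((Matrix.of N.b ^ t) u) w := fun u =>
      Finset.sum_nonneg fun w _ => Set.indicator_nonneg (fun w _ =>
        Matrix.nonneg_of_mem_rowStochastic (pow_mem N.of_b_mem_rowStochastic t)) w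
    rw [peMeasure_pePath_succ_mem N T A hacyc hv htT C, Matrix.sum_indicator_pow_succ_apply]
    simp only [Matrix.of_apply]
    rw [ENNReal.ofReal_sum_of_nonneg fun u _ => mul_nonneg (N.b_nonneg v u) (hnonneg u)]
    refine Finset.sum_congr rfl fun u _ => ?_
    rw [ih u (by omega), ENNReal.ofReal_mul (N.b_nonneg v u)]

/-- in the Path-Effect process on an acyclic network, for every subset `C`,
every non-void node `v` and every `0 ≤ t ≤ T`, the probability that `P^t_v[0] ∈ C` equals
`∑_{u ∈ C} (b^t) v u`, the probability that the Markov chain with transition matrix `b`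
started at `v` is in `C` at time `t`; in particular it does not depend on the transient
initial set `A`. -/
theorem pePath_source_prob {V : Type*} [Fintype V] [LinearOrder V] (N : InfoNetwork V)
    (hacyc : N.Acyclic) (T : ℕ) (A : Set V) (hA : A ⊆ {x : V | x ≠ N.d})
    (C : Set V) (v : V) (hv : v ≠ N.d) (t : ℕ) (htT : t ≤ T) :
    peMeasure V T {ω | pePath N T A ω.1 ω.2 t v 0 ∈ C} =
      ENNReal.ofReal (∑ u, C.indicator ((Matrix.of N.b ^ t) v) u) :=
  pePath_source_prob_general N hacyc T A C v t htT
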